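/- arXiv:2510.25494 — 3 statements merged into one kernel-verified Lean document; each statement's English description precedes it below -/
import Mathlib

section
/- Define ξ₁(β) = βu₀/r - β(e^{θ₁(u₀)d} + (θ₁(u₀)/θ₂(u₀))e^{-θ₂(u₀)d})/(θ₁(u₀)(e^{θ₁(u₀)d} - e^{-θ₂(u₀)d})) and ξ₂(β) = (βu₀-1)/r + β/θ₂(u₀). Then ξ₁(β) ≤ ξ₂(β) if and only if ζ ≤ β, with equality if and only if β = ζ, where ζ = θ₁(u₀)θ₂(u₀)(e^{θ₁(u₀)d} - e^{-θ₂(u₀)d})/(r(θ₁(u₀)+θ₂(u₀))e^{θ₁(u₀)d}). -/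
open Real Set

noncomputable def th1 (μ σ r u : ℝ) : ℝ := (Real.sqrt ((μ - u)^2 + 2*r*σ^2) + (μ - u)) / σ^2
noncomputable def th2 (μ σ r u : ℝ) : ℝ := (Real.sqrt ((μ - u)^2 + 2*r*σ^2) - (μ - u)) / σ^2

noncomputable def zeta (μ σ r d u₀ : ℝ) : ℝ :=
  th1 μ σ r u₀ * th2 μ σ r u₀ * (Real.exp (th1 μ σ r u₀ * d) - Real.exp (-(th2 μ σ r u₀) * d)) /
    (r * (th1 μ σ r u₀ + th2 μ σ r u₀) * Real.exp (th1 μ σ r u₀ * d))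

noncomputable def xi1 (μ σ r d u₀ β : ℝ) : ℝ :=
  β * u₀ / r - β * (Real.exp (th1 μ σ r u₀ * d) + th1 μ σ r u₀ / th2 μ σ r u₀ * Real.exp (-(th2 μ σ r u₀) * d)) /
    (th1 μ σ r u₀ * (Real.exp (th1 μ σ r u₀ * d) - Real.exp (-(th2 μ σ r u₀) * d)))

noncomputable def xi2 (μ σ r u₀ β : ℝ) : ℝ := (β * u₀ - 1) / r + β / th2 μ σ r u₀

theorem stmt4 (μ σ r d u₀ β : ℝ) (hσ : 0 < σ) (hr : 0 < r) (hd : 0 < d) (hu₀ : 0 < u₀)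
    (hβ : 0 < β) :
    (xi1 μ σ r d u₀ β ≤ xi2 μ σ r u₀ β ↔ zeta μ σ r d u₀ ≤ β) ∧
    (xi1 μ σ r d u₀ β = xi2 μ σ r u₀ β ↔ β = zeta μ σ r d u₀) := by
  have hσ2 : (0:ℝ) < σ^2 := by positivity
  have hs : |μ - u₀| < Real.sqrt ((μ - u₀)^2 + 2*r*σ^2) := by
    rw [← Real.sqrt_sq_eq_abs]
    apply Real.sqrt_lt_sqrt (by positivity)
    nlinarith
  have habs := abs_lt.mp hs
  have ht1pos : 0 < th1 μ σ r u₀ := by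
    unfold th1; apply div_pos _ hσ2; linarith [habs.1]
  have ht2pos : 0 < th2 μ σ r u₀ := by
    unfold th2; apply div_pos _ hσ2; linarith [habs.2]
  set t1 := th1 μ σ r u₀ with ht1
  set t2 := th2 μ σ r u₀ with ht2
  have hE : Real.exp (-t2 * d) < Real.exp (t1 * d) := by
    apply Real.exp_lt_exp.mpr; nlinarith
  have hE1 : 0 < Real.exp (t1 * d) := Real.exp_pos _
  have hE2 : 0 < Real.exp (-t2 * d) := Real.exp_pos _
  have hdiff : 0 < Real.exp (t1 * d) - Real.exp (-t2 * d) := by linarith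
  set C := (t1+t2) * Real.exp (t1 * d) / (t1*t2*(Real.exp (t1 * d) - Real.exp (-t2 * d))) with hC
  have hCpos : 0 < C := by
    apply div_pos (by positivity) (by positivity)
  have key : xi2 μ σ r u₀ β - xi1 μ σ r d u₀ β = C * (β - zeta μ σ r d u₀) := by
    unfold xi1 xi2 zeta
    rw [← ht1, ← ht2, hC]
    set a := Real.exp (t1 * d) with ha
    set b := Real.exp (-t2 * d) with hb
    have h1 : t1 ≠ 0 := ne_of_gt ht1pos
    have h2 : t2 ≠ 0 := ne_of_gt ht2pos
    have h3 : r ≠ 0 := ne_of_gt hr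
    have h4 : a ≠ 0 := ne_of_gt hE1
    have h5 : a - b ≠ 0 := ne_of_gt hdiff
    have h6 : t1 + t2 ≠ 0 := by positivity
    field_simp
    ring
  constructor
  · constructor <;> intro h <;> nlinarith [key, hCpos]
  · constructor <;> intro h
    · have h0 : C * (β - zeta μ σ r d u₀) = 0 := by linarith [key]
      rcases mul_eq_zero.mp h0 with h1 | h1
      · exact absurd h1 (ne_of_gt hCpos)
      · linarith
    · nlinarith [key]
end

section
/- The function ḡ(z) = (βu₀-1)/r + (1/r)·θ₁(u₀)(e^{θ₁(u₀)d}-e^{-θ₂(u₀)d})/((θ₁(u₀)+θ₂(u₀))e^{θ₁(u₀)d})·e^{-θ₂(u₀)(z-d)} satisfies -r ḡ(z) - (μ-u₀) ḡ'(z) + (σ²/2) ḡ''(z) + βu₀ = 1 for all z > d, is convex, bounded, and ḡ(z) → (βu₀-1)/r as z → ∞. -/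
open Real Set

noncomputable def gbar (μ σ r d u₀ β z : ℝ) : ℝ :=
  (β * u₀ - 1) / r + (1/r) * (th1 μ σ r u₀ * (Real.exp (th1 μ σ r u₀ * d) - Real.exp (-(th2 μ σ r u₀) * d)) /
    ((th1 μ σ r u₀ + th2 μ σ r u₀) * Real.exp (th1 μ σ r u₀ * d))) * Real.exp (-(th2 μ σ r u₀) * (z - d))

/-!
`ḡ` is a constant plus a positive multiple of `exp (-θ₂ (z - d))`. Such a function solves
`-r g - (μ - u₀) g' + σ²/2 g'' = -r C` exactly when `σ²/2 θ² + (μ - u₀) θ - r = 0`, and `θ₂` is the positive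
root of this quadratic. Convexity, boundedness and the limit follow from `θ₂ > 0` and the
positivity of the coefficient, which holds because `θ₁ d > -θ₂ d` for `d > 0`.
-/

open Filter Topology

noncomputable def expDecay (C K b d z : ℝ) : ℝ := C + K * exp (-b * (z - d))

section expDecay

variable {C K b d : ℝ}

theorem hasDerivAt_expDecay (x : ℝ) :
    HasDerivAt (expDecay C K b d) (expDecay 0 (-b * K) b d x) x := by
  have hlin : HasDerivAt (fun z : ℝ => -b * (z - d)) (-b) x := by
    simpa using ((hasDerivAt_id x).sub_const d).const_mul (-b)
  exact ((hlin.exp.const_mul K).const_add C).congr_deriv (by rw [expDecay]; ring)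

theorem differentiable_expDecay : Differentiable ℝ (expDecay C K b d) :=
  fun x => (hasDerivAt_expDecay x).differentiableAt

theorem deriv_expDecay : deriv (expDecay C K b d) = expDecay 0 (-b * K) b d :=
  funext fun x => (hasDerivAt_expDecay x).deriv

theorem expDecay_ode {σ m r : ℝ} (hb : σ ^ 2 / 2 * b ^ 2 + m * b - r = 0) (z : ℝ) :
    -r * expDecay C K b d z - m * deriv (expDecay C K b d) z
      + σ ^ 2 / 2 * deriv (deriv (expDecay C K b d)) z = -r * C := by
  simp only [deriv_expDecay, expDecay]
  linear_combination K * exp (-b * (z - d)) * hb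

theorem convexOn_expDecay (hK : 0 ≤ K) : ConvexOn ℝ univ (expDecay C K b d) := by
  refine convexOn_univ_of_deriv2_nonneg differentiable_expDecay
    (deriv_expDecay ▸ differentiable_expDecay) fun x => ?_
  simp only [Function.iterate_succ_apply, Function.iterate_zero_apply, deriv_expDecay, expDecay]
  have : 0 ≤ b * b * K := mul_nonneg (mul_self_nonneg b) hK
  nlinarith [exp_pos (-b * (x - d))]

theorem abs_expDecay_le (hb : 0 ≤ b) {z : ℝ} (hz : d ≤ z) :
    |expDecay C K b d z| ≤ |C| + |K| := by
  have hexp : exp (-b * (z - d)) ≤ 1 :=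
    exp_le_one_iff.mpr (by nlinarith)
  calc |expDecay C K b d z| ≤ |C| + |K| * exp (-b * (z - d)) := by
        simpa [expDecay, abs_mul] using abs_add_le C (K * exp (-b * (z - d)))
    _ ≤ |C| + |K| := by gcongr; exact mul_le_of_le_one_right (abs_nonneg K) hexp

theorem tendsto_expDecay (hb : 0 < b) : Tendsto (expDecay C K b d) atTop (𝓝 C) := by
  have hlin : Tendsto (fun z : ℝ => -b * (z - d)) atTop atBot :=
    (tendsto_atTop_add_const_right _ (-d) tendsto_id).const_mul_atTop_of_neg (neg_neg_of_pos hb)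
  convert ((tendsto_exp_atBot.comp hlin).const_mul K).const_add C using 2
  · simp [expDecay]
  · simp

end expDecay

section roots

variable {μ σ r u : ℝ}

theorem abs_lt_sqrt_discr (hσ : σ ≠ 0) (hr : 0 < r) :
    |μ - u| < √((μ - u) ^ 2 + 2 * r * σ ^ 2) := by
  rw [← sqrt_sq_eq_abs]
  exact sqrt_lt_sqrt (sq_nonneg _) (by nlinarith [sq_pos_of_ne_zero hσ])

theorem th1_pos (hσ : σ ≠ 0) (hr : 0 < r) : 0 < th1 μ σ r u :=
  div_pos (by linarith [neg_abs_le (μ - u), abs_lt_sqrt_discr (μ := μ) (u := u) hσ hr])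
    (sq_pos_of_ne_zero hσ)

theorem th2_pos (hσ : σ ≠ 0) (hr : 0 < r) : 0 < th2 μ σ r u :=
  div_pos (by linarith [le_abs_self (μ - u), abs_lt_sqrt_discr (μ := μ) (u := u) hσ hr])
    (sq_pos_of_ne_zero hσ)

theorem th2_quadratic (hσ : σ ≠ 0) (hr : 0 ≤ r) :
    σ ^ 2 / 2 * th2 μ σ r u ^ 2 + (μ - u) * th2 μ σ r u - r = 0 := by
  have hsq : √((μ - u) ^ 2 + 2 * r * σ ^ 2) ^ 2 = (μ - u) ^ 2 + 2 * r * σ ^ 2 :=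
    sq_sqrt (by positivity)
  unfold th2
  generalize √((μ - u) ^ 2 + 2 * r * σ ^ 2) = s at hsq
  field_simp
  linear_combination hsq

end roots

noncomputable def gbarCoeff (μ σ r d u : ℝ) : ℝ :=
  (1/r) * (th1 μ σ r u * (exp (th1 μ σ r u * d) - exp (-(th2 μ σ r u) * d)) /
    ((th1 μ σ r u + th2 μ σ r u) * exp (th1 μ σ r u * d)))

theorem gbarCoeff_pos {μ σ r d u : ℝ} (hσ : σ ≠ 0) (hr : 0 < r) (hd : 0 < d) :
    0 < gbarCoeff μ σ r d u := by
  have h1 := th1_pos (μ := μ) (u := u) hσ hr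
  have h2 := th2_pos (μ := μ) (u := u) hσ hr
  have hexp : exp (-(th2 μ σ r u) * d) < exp (th1 μ σ r u * d) := exp_lt_exp.mpr (by nlinarith)
  unfold gbarCoeff
  exact mul_pos (by positivity) (div_pos (mul_pos h1 (sub_pos.mpr hexp)) (by positivity))

theorem gbar_eq_expDecay (μ σ r d u₀ β : ℝ) :
    gbar μ σ r d u₀ β = expDecay ((β * u₀ - 1) / r) (gbarCoeff μ σ r d u₀) (th2 μ σ r u₀) d :=
  rfl

theorem stmt7_general (μ σ r d u₀ β : ℝ) (hσ : 0 < σ) (hr : 0 < r) (hd : 0 < d) :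
    (∀ z > d,
      -r * gbar μ σ r d u₀ β z - (μ - u₀) * deriv (gbar μ σ r d u₀ β) z
        + σ^2/2 * deriv (deriv (gbar μ σ r d u₀ β)) z + β * u₀ = 1) ∧
    ConvexOn ℝ (Set.Ici d) (gbar μ σ r d u₀ β) ∧
    (∃ M : ℝ, ∀ z ∈ Set.Ici d, |gbar μ σ r d u₀ β z| ≤ M) ∧
    Filter.Tendsto (gbar μ σ r d u₀ β) Filter.atTop (nhds ((β * u₀ - 1) / r)) := by
  have hb : 0 < th2 μ σ r u₀ := th2_pos hσ.ne' hr
  rw [gbar_eq_expDecay]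
  refine ⟨fun z _ => ?_,
    (convexOn_expDecay (gbarCoeff_pos hσ.ne' hr hd).le).subset (subset_univ _) (convex_Ici d),
    ⟨_, fun z hz => abs_expDecay_le hb.le hz⟩, tendsto_expDecay hb⟩
  rw [expDecay_ode (th2_quadratic hσ.ne' hr.le)]
  field_simp
  ring

theorem stmt7 (μ σ r d u₀ β : ℝ) (hσ : 0 < σ) (hr : 0 < r) (hd : 0 < d) (hu₀ : 0 < u₀)
    (hβ : 0 < β) :
    (∀ z > d,
      -r * gbar μ σ r d u₀ β z - (μ - u₀) * deriv (gbar μ σ r d u₀ β) z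
        + σ^2/2 * deriv (deriv (gbar μ σ r d u₀ β)) z + β * u₀ = 1) ∧
    ConvexOn ℝ (Set.Ici d) (gbar μ σ r d u₀ β) ∧
    (∃ M : ℝ, ∀ z ∈ Set.Ici d, |gbar μ σ r d u₀ β z| ≤ M) ∧
    Filter.Tendsto (gbar μ σ r d u₀ β) Filter.atTop (nhds ((β * u₀ - 1) / r)) :=
  stmt7_general μ σ r d u₀ β hσ hr hd
end

section
/- For fixed z_f ∈ (0,d), the function τ(·, z_f) defined by τ(z, z_f) = e^{θ₁(0)z}((θ₁(u₀)+θ₂(0))e^{θ₁(u₀)z_f} - (θ₂(0)-θ₂(u₀))e^{-θ₂(u₀)z_f}) + e^{-θ₂(0)z}e^{(θ₁(0)+θ₂(0))z_f}((θ₁(0)-θ₁(u₀))e^{θ₁(u₀)z_f} - (θ₁(0)+θ₂(u₀))e^{-θ₂(u₀)z_f}) is strictly increasing in z on (z_f, ∞). -/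
open Real Set

noncomputable def tau (μ σ r u₀ z zf : ℝ) : ℝ :=
  Real.exp (th1 μ σ r 0 * z) *
      ((th1 μ σ r u₀ + th2 μ σ r 0) * Real.exp (th1 μ σ r u₀ * zf)
        - (th2 μ σ r 0 - th2 μ σ r u₀) * Real.exp (-(th2 μ σ r u₀) * zf)) +
    Real.exp (-(th2 μ σ r 0) * z) * Real.exp ((th1 μ σ r 0 + th2 μ σ r 0) * zf) *
      ((th1 μ σ r 0 - th1 μ σ r u₀) * Real.exp (th1 μ σ r u₀ * zf)
        - (th1 μ σ r 0 + th2 μ σ r u₀) * Real.exp (-(th2 μ σ r u₀) * zf))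

lemma sqrt_add_self_pos' (v c : ℝ) (hc : 0 < c) : 0 < Real.sqrt (v^2 + c) + v := by
  have h1 : Real.sqrt (v^2+c) ^ 2 = v^2 + c := Real.sq_sqrt (by positivity)
  have h2 := Real.sqrt_nonneg (v^2+c)
  nlinarith

lemma aux_mono' (c x y : ℝ) (hc : 0 < c) (hxy : y < x) :
    Real.sqrt (y^2+c) + y < Real.sqrt (x^2+c) + x := by
  have ha : Real.sqrt (x^2+c) ^ 2 = x^2 + c := Real.sq_sqrt (by positivity)
  have hb : Real.sqrt (y^2+c) ^ 2 = y^2 + c := Real.sq_sqrt (by positivity)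
  have hax : 0 < Real.sqrt (x^2+c) + x := sqrt_add_self_pos' x c hc
  have hby : 0 < Real.sqrt (y^2+c) + y := sqrt_add_self_pos' y c hc
  have hapos : 0 < Real.sqrt (x^2+c) := Real.sqrt_pos.2 (by positivity)
  have hbpos : 0 < Real.sqrt (y^2+c) := Real.sqrt_pos.2 (by positivity)
  nlinarith [mul_pos (add_pos hax hby) (sub_pos.2 hxy), add_pos hapos hbpos]

lemma hasDerivAt_exp_mul' (c x : ℝ) :
    HasDerivAt (fun z : ℝ => Real.exp (c*z)) (c * Real.exp (c*x)) x := by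
  simpa [mul_comm] using (HasDerivAt.exp ((hasDerivAt_id x).const_mul c))

theorem stmt16 (μ σ r u₀ d zf : ℝ) (hσ : 0 < σ) (hr : 0 < r) (hu₀ : 0 < u₀) (hd : 0 < d)
    (hzf : zf ∈ Set.Ioo 0 d) :
    StrictMonoOn (fun z => tau μ σ r u₀ z zf) (Set.Ioi zf) := by
  obtain ⟨hzf0, hzfd⟩ := hzf
  have hσ2 : (0:ℝ) < σ^2 := by positivity
  have hc : (0:ℝ) < 2*r*σ^2 := by positivity
  simp only [tau]
  set t1 := th1 μ σ r 0 with ht1def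
  set s1 := th1 μ σ r u₀ with hs1def
  set t2 := th2 μ σ r 0 with ht2def
  set s2 := th2 μ σ r u₀ with hs2def
  have ht1pos : 0 < t1 := by
    rw [ht1def, th1]
    exact div_pos (sqrt_add_self_pos' (μ - 0) _ hc) hσ2
  have hs1pos : 0 < s1 := by
    rw [hs1def, th1]
    exact div_pos (sqrt_add_self_pos' (μ - u₀) _ hc) hσ2
  have ht2pos : 0 < t2 := by
    rw [ht2def, th2]
    have := sqrt_add_self_pos' (-(μ - 0)) _ hc
    rw [neg_sq] at this
    apply div_pos _ hσ2; linarith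
  have hs2pos : 0 < s2 := by
    rw [hs2def, th2]
    have := sqrt_add_self_pos' (-(μ - u₀)) _ hc
    rw [neg_sq] at this
    apply div_pos _ hσ2; linarith
  have hs1t1 : s1 < t1 := by
    rw [hs1def, ht1def, th1, th1]
    have := aux_mono' (2*r*σ^2) (μ - 0) (μ - u₀) hc (by linarith)
    exact div_lt_div_of_pos_right this hσ2
  have ht2s2 : t2 < s2 := by
    rw [hs2def, ht2def, th2, th2]
    have := aux_mono' (2*r*σ^2) (-(μ - u₀)) (-(μ - 0)) hc (by linarith)
    rw [neg_sq, neg_sq] at this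
    apply div_lt_div_of_pos_right _ hσ2; linarith
  set E1 := Real.exp (s1 * zf) with hE1def
  set E2 := Real.exp (-s2 * zf) with hE2def
  set K := Real.exp ((t1 + t2) * zf) with hKdef
  set A := (s1 + t2) * E1 - (t2 - s2) * E2 with hAdef
  set C := (t1 - s1) * E1 - (t1 + s2) * E2 with hCdef
  have hE1pos : 0 < E1 := Real.exp_pos _
  have hE2pos : 0 < E2 := Real.exp_pos _
  have hKpos : 0 < K := Real.exp_pos _
  have hApos : 0 < A := by
    have : A = (s1 + t2) * E1 + (s2 - t2) * E2 := by rw [hAdef]; ring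
    rw [this]
    have h1 : 0 < (s1 + t2) * E1 := mul_pos (by linarith) hE1pos
    have h2 : 0 < (s2 - t2) * E2 := mul_pos (by linarith) hE2pos
    linarith
  have hkey : t1 * A - t2 * C = (t1 + t2) * (s1 * E1 + s2 * E2) := by
    rw [hAdef, hCdef]; ring
  have hSpos : 0 < s1 * E1 + s2 * E2 := by positivity
  apply strictMonoOn_of_deriv_pos (convex_Ioi zf)
  · fun_prop
  · intro x hx
    rw [interior_Ioi, Set.mem_Ioi] at hx
    have hD : HasDerivAt (fun z => Real.exp (t1 * z) * A + Real.exp (-t2 * z) * K * C)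
        (t1 * Real.exp (t1 * x) * A + (-t2) * Real.exp (-t2 * x) * K * C) x := by
      have h1 := (hasDerivAt_exp_mul' t1 x).mul_const A
      have h2 := ((hasDerivAt_exp_mul' (-t2) x).mul_const K).mul_const C
      exact h1.add h2
    rw [hD.deriv]
    have hKx : K < Real.exp ((t1 + t2) * x) := by
      rw [hKdef]
      exact Real.exp_lt_exp.mpr (by nlinarith)
    have hAC : 0 < t1 * A - t2 * C := by
      rw [hkey]; exact mul_pos (by linarith) hSpos
    have h2 : t2 * K * C < t1 * A * K := by nlinarith [mul_pos hKpos hAC]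
    have h3 : t1 * A * K < t1 * A * Real.exp ((t1 + t2) * x) :=
      mul_lt_mul_of_pos_left hKx (mul_pos ht1pos hApos)
    have hexp_eq : Real.exp (t1 * x) = Real.exp (-t2 * x) * Real.exp ((t1 + t2) * x) := by
      rw [← Real.exp_add]; ring_nf
    rw [hexp_eq]
    have hfin : 0 < Real.exp (-t2 * x) *
        (t1 * A * Real.exp ((t1 + t2) * x) - t2 * K * C) :=
      mul_pos (Real.exp_pos _) (by linarith)
    calc (0:ℝ) < Real.exp (-t2 * x) *
          (t1 * A * Real.exp ((t1 + t2) * x) - t2 * K * C) := hfin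
      _ = t1 * (Real.exp (-t2 * x) * Real.exp ((t1 + t2) * x)) * A
          + -t2 * Real.exp (-t2 * x) * K * C := by ring
end
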